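/- Let n ≥ 2, let x_1,…,x_n ∈ {0,1}^d be pairwise distinct, let y_1,…,y_n ∈ {−1,1}, and let k(x,x') = exp(−100·(ln n)·‖x−x'‖₂²). Define D : ℝ^n → ℝ by D(γ) = Σ_{i=1}^n γ_i − (1/2)·Σ_{i,j=1}^n γ_i γ_j y_i y_j k(x_i,x_j). If γ* ∈ ℝ^n with γ*_i ≥ 0 for all i attains the maximum of D over the nonnegative orthant, then γ*_i ≤ 3n for every i. -/

import Mathlib

/-!
Zeroing the `i`-th coordinate of a maximizer `γ` cannot increase `D`. Along a coordinate line `D`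
is a concave quadratic whose leading coefficient is `-1/2`, because the kernel matrix has unit
diagonal, and whose slope involves the off-diagonal entries, which are at least `-n⁻¹⁰⁰` because
distinct binary vectors are at squared distance at least `1`. This gives
`γ i ≤ 2 (1 + n⁻¹⁰⁰ ∑ j, γ j)`; summing over `i` bounds `∑ j, γ j` by `4 n`, hence `γ i ≤ 4`.
-/

open Finset

/-- The Gaussian kernel with parameter `C = 100 ln n`. -/
noncomputable def gaussK (n d : ℕ) (x y : Fin d → ℝ) : ℝ :=
  Real.exp (-(100 * Real.log n) * ∑ l, (x l - y l) ^ 2)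

open Matrix

section DualObjective

variable {ι : Type*} [Fintype ι]

/-- The dual objective `D`, with a general matrix `Q` for `y i * y j * k (x i) (x j)`. -/
noncomputable def svmDual (Q : Matrix ι ι ℝ) (γ : ι → ℝ) : ℝ :=
  ∑ i, γ i - γ ⬝ᵥ (Q *ᵥ γ) / 2

lemma svmDual_eq_sum (Q : Matrix ι ι ℝ) (γ : ι → ℝ) :
    svmDual Q γ = ∑ i, γ i - 1 / 2 * ∑ i, ∑ j, γ i * γ j * Q i j := by
  simp only [svmDual, dotProduct, mulVec, mul_sum, sum_div]
  congr 1
  exact sum_congr rfl fun i _ => sum_congr rfl fun j _ => by ring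

variable [DecidableEq ι]

lemma svmDual_add_single {Q : Matrix ι ι ℝ} (hQ : Q.IsSymm) (γ : ι → ℝ) (i : ι) (t : ℝ) :
    svmDual Q (γ + Pi.single i t) = svmDual Q γ + t * (1 - (Q *ᵥ γ) i) - t ^ 2 * Q i i / 2 := by
  have hsymm : γ ⬝ᵥ (Q *ᵥ Pi.single i t) = (Q *ᵥ γ) i * t := by
    rw [dotProduct_mulVec, ← vecMul_transpose, hQ.eq, dotProduct_single]
  have hdiag : (Q *ᵥ Pi.single i t) i = Q i i * t := by simp
  simp only [svmDual, mulVec_add, dotProduct_add, add_dotProduct, single_dotProduct, hsymm, hdiag,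
    Pi.add_apply, sum_add_distrib, Fintype.sum_pi_single']
  ring

lemma diag_mul_sub_le_mulVec_apply {Q : Matrix ι ι ℝ} {γ : ι → ℝ} {i : ι} {ε : ℝ} (hγ : 0 ≤ γ)
    (hε : 0 ≤ ε) (hQ : ∀ j ≠ i, -ε ≤ Q i j) : Q i i * γ i - ε * ∑ j, γ j ≤ (Q *ᵥ γ) i := by
  have hoff : -(ε * ∑ j ∈ univ.erase i, γ j) ≤ ∑ j ∈ univ.erase i, Q i j * γ j := by
    rw [mul_sum, ← sum_neg_distrib]
    exact sum_le_sum fun j hj => by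
      simpa using mul_le_mul_of_nonneg_right (hQ j (ne_of_mem_erase hj)) (hγ j)
  have hsum : ∑ j ∈ univ.erase i, γ j ≤ ∑ j, γ j :=
    sum_le_sum_of_subset_of_nonneg (erase_subset i univ) fun j _ _ => hγ j
  have hsplit := add_sum_erase univ (fun j => Q i j * γ j) (mem_univ i)
  simp only [mulVec, dotProduct, ← hsplit]
  nlinarith [mul_le_mul_of_nonneg_left hsum hε]

lemma le_of_isMaxOn_svmDual {Q : Matrix ι ι ℝ} (hQ : Q.IsSymm) {γ : ι → ℝ}
    (hmax : IsMaxOn (svmDual Q) (Set.Ici 0) γ) (hγ : 0 ≤ γ) {ε : ℝ} (hε : 0 ≤ ε) {i : ι}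
    (hdiag : Q i i = 1) (hoff : ∀ j ≠ i, -ε ≤ Q i j) : γ i ≤ 2 * (1 + ε * ∑ j, γ j) := by
  have hzero : 0 ≤ γ + Pi.single i (-γ i) := by
    intro j
    by_cases h : j = i
    · simp [h]
    · simpa [h] using hγ j
  have hdrop := isMaxOn_iff.1 hmax _ hzero
  rw [svmDual_add_single hQ, hdiag] at hdrop
  have hrow := diag_mul_sub_le_mulVec_apply hγ hε hoff
  rw [hdiag, one_mul] at hrow
  have hS : 0 ≤ ε * ∑ j, γ j := mul_nonneg hε (sum_nonneg fun j _ => hγ j)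
  by_contra! h
  nlinarith [mul_le_mul_of_nonneg_left hrow (hγ i)]

lemma le_four_of_isMaxOn_svmDual {Q : Matrix ι ι ℝ} (hQ : Q.IsSymm) {γ : ι → ℝ}
    (hmax : IsMaxOn (svmDual Q) (Set.Ici 0) γ) (hγ : 0 ≤ γ) {ε : ℝ} (hε : 0 ≤ ε)
    (hcard : 4 * Fintype.card ι * ε ≤ 1) (hdiag : ∀ i, Q i i = 1)
    (hoff : ∀ i j, i ≠ j → -ε ≤ Q i j) (i : ι) : γ i ≤ 4 := by
  set S := ∑ j, γ j
  have hcoord (j : ι) : γ j ≤ 2 * (1 + ε * S) :=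
    le_of_isMaxOn_svmDual hQ hmax hγ hε (hdiag j) fun k hk => hoff j k hk.symm
  have hS0 : 0 ≤ S := sum_nonneg fun j _ => hγ j
  have hS : S ≤ Fintype.card ι * (2 * (1 + ε * S)) := by
    simpa using sum_le_sum fun j (_ : j ∈ univ) => hcoord j
  have hS4 : S ≤ 4 * Fintype.card ι := by nlinarith [mul_le_mul_of_nonneg_right hcard hS0]
  nlinarith [hcoord i, mul_le_mul_of_nonneg_left hS4 hε]

end DualObjective

lemma one_le_sum_sq_sub_of_ne {κ : Type*} [Fintype κ] {u v : κ → ℝ}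
    (hu : ∀ l, u l = 0 ∨ u l = 1) (hv : ∀ l, v l = 0 ∨ v l = 1) (huv : u ≠ v) :
    1 ≤ ∑ l, (u l - v l) ^ 2 := by
  obtain ⟨l, hl⟩ := Function.ne_iff.1 huv
  have hterm : 1 ≤ (u l - v l) ^ 2 := by
    rcases hu l with h | h <;> rcases hv l with h' | h' <;> simp_all
  exact hterm.trans (single_le_sum (fun l _ => sq_nonneg (u l - v l)) (mem_univ l))

lemma gaussK_self (n d : ℕ) (u : Fin d → ℝ) : gaussK n d u u = 1 := by
  simp [gaussK]

lemma gaussK_comm (n d : ℕ) (u v : Fin d → ℝ) : gaussK n d u v = gaussK n d v u := by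
  simp only [gaussK, sub_sq_comm]

lemma gaussK_le_of_one_le_sum_sq {n d : ℕ} (hn : 1 ≤ n) {u v : Fin d → ℝ}
    (huv : 1 ≤ ∑ l, (u l - v l) ^ 2) : gaussK n d u v ≤ ((n : ℝ) ^ 100)⁻¹ := by
  have hlog : 0 ≤ Real.log n := Real.log_nonneg (by exact_mod_cast hn)
  rw [← Real.exp_log (by positivity : (0 : ℝ) < (n : ℝ) ^ 100), ← Real.exp_neg, Real.log_pow,
    gaussK, Real.exp_le_exp]
  push_cast
  nlinarith

lemma neg_inv_pow_le_mul_gaussK {n d : ℕ} (hn : 1 ≤ n) {s : ℝ} (hs : |s| = 1) {u v : Fin d → ℝ}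
    (hu : ∀ l, u l = 0 ∨ u l = 1) (hv : ∀ l, v l = 0 ∨ v l = 1) (huv : u ≠ v) :
    -((n : ℝ) ^ 100)⁻¹ ≤ s * gaussK n d u v := by
  have hk := gaussK_le_of_one_le_sum_sq hn (one_le_sum_sq_sub_of_ne hu hv huv)
  have habs : |s * gaussK n d u v| = gaussK n d u v := by
    rw [abs_mul, hs, one_mul]
    exact abs_of_pos (Real.exp_pos _)
  linarith [neg_abs_le (s * gaussK n d u v)]

/-- Any maximizer of the dual hard-margin SVM objective
`D(γ) = Σ_i γ_i − (1/2) Σ_{i,j} γ_i γ_j y_i y_j k(x_i,x_j)` over the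
nonnegative orthant has all coordinates at most `3n`. -/
theorem dual_svm_maximizer_bounded (n d : ℕ) (hn : 2 ≤ n)
    (x : Fin n → Fin d → ℝ)
    (hx01 : ∀ i l, x i l = 0 ∨ x i l = 1)
    (hxinj : Function.Injective x)
    (y : Fin n → ℝ) (hy : ∀ i, y i = 1 ∨ y i = -1)
    (γs : Fin n → ℝ) (hγs : ∀ i, 0 ≤ γs i)
    (hmax : ∀ γ : Fin n → ℝ, (∀ i, 0 ≤ γ i) →
      (∑ i, γ i) - (1 / 2) * ∑ i, ∑ j, γ i * γ j * y i * y j * gaussK n d (x i) (x j)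
        ≤ (∑ i, γs i) -
            (1 / 2) * ∑ i, ∑ j, γs i * γs j * y i * y j * gaussK n d (x i) (x j)) :
    ∀ i, γs i ≤ 3 * (n : ℝ) := by
  set Q : Matrix (Fin n) (Fin n) ℝ := Matrix.of fun i j => y i * y j * gaussK n d (x i) (x j)
  have hD (γ : Fin n → ℝ) : svmDual Q γ =
      (∑ i, γ i) - (1 / 2) * ∑ i, ∑ j, γ i * γ j * y i * y j * gaussK n d (x i) (x j) := by
    simp only [svmDual_eq_sum, Q, of_apply, mul_assoc]
  have hQ : Q.IsSymm := by
    ext i j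
    simp only [Q, transpose_apply, of_apply, gaussK_comm n d (x i), mul_comm (y i)]
  have hy1 (i : Fin n) : |y i| = 1 := by rcases hy i with h | h <;> simp [h]
  have hdiag (i : Fin n) : Q i i = 1 := by
    simp only [Q, of_apply, gaussK_self, mul_one]
    rw [← abs_mul_abs_self, hy1, one_mul]
  have hoff (i j : Fin n) (hij : i ≠ j) : -((n : ℝ) ^ 100)⁻¹ ≤ Q i j :=
    neg_inv_pow_le_mul_gaussK (by omega) (by rw [abs_mul, hy1, hy1, one_mul]) (hx01 i) (hx01 j)
      (hxinj.ne hij)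
  have hn2 : (2 : ℝ) ≤ n := by exact_mod_cast hn
  have hcard : 4 * Fintype.card (Fin n) * ((n : ℝ) ^ 100)⁻¹ ≤ 1 := by
    have h99 : (4 : ℝ) ≤ n ^ 99 :=
      (by norm_num : (4 : ℝ) ≤ 2 ^ 99).trans (pow_le_pow_left₀ (by norm_num) hn2 99)
    rw [Fintype.card_fin, ← div_eq_mul_inv, div_le_one (by positivity), pow_succ]
    nlinarith
  have hmax' : IsMaxOn (svmDual Q) (Set.Ici 0) γs :=
    isMaxOn_iff.2 fun γ hγ => by simpa only [hD] using hmax γ hγ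
  intro i
  linarith [le_four_of_isMaxOn_svmDual hQ hmax' hγs (by positivity) hcard hdiag hoff i]
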